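/- arXiv:2108.10676 — 2 statements merged into one kernel-verified Lean document; each statement's English description precedes it below -/
import Mathlib

section
/- For every k ≥ 0, the Catalan number Cat(2^k - 1) is odd. -/
/-!
By Segner's recurrence, `Cat(2m+1) = ∑_{i+j=2m} Cat(i) Cat(j)`. The terms for `(i, j)` and `(j, i)`
cancel modulo 2, leaving only the middle term `Cat(m)²`, so `Cat(2m+1) ≡ Cat(m) (mod 2)`. Since
`2^(k+1) - 1 = 2 (2^k - 1) + 1`, induction on `k` gives `Cat(2^k - 1) ≡ Cat(0) = 1`.
-/

open Finset

theorem Finset.Nat.sum_antidiagonal_two_mul_mul_of_charTwo {R : Type*} [CommSemiring R] [CharP R 2]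
    (f : ℕ → R) (m : ℕ) : ∑ ij ∈ antidiagonal (2 * m), f ij.1 * f ij.2 = f m ^ 2 := by
  have hmid : (m, m) ∈ antidiagonal (2 * m) := by simp [two_mul]
  have hoff : ∑ ij ∈ (antidiagonal (2 * m)).erase (m, m), f ij.1 * f ij.2 = 0 := by
    refine sum_involution (fun ij _ => ij.swap) (fun ij _ => ?_) (fun ij hij _ hswap => ?_)
      (fun ij hij => ?_) (fun ij _ => Prod.swap_swap ij)
    · rw [Prod.fst_swap, Prod.snd_swap, mul_comm, CharTwo.add_self_eq_zero]
    · rw [mem_erase, HasAntidiagonal.mem_antidiagonal] at hij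
      have hdiag : ij.2 = ij.1 := congrArg Prod.fst hswap
      exact hij.1 (Prod.ext (by omega) (by omega))
    · rw [mem_erase, HasAntidiagonal.mem_antidiagonal] at hij ⊢
      exact ⟨fun h => hij.1 (by simpa using congrArg Prod.swap h), by simp [hij.2, add_comm]⟩
  rw [← add_sum_erase _ _ hmid, hoff, add_zero, sq]

theorem catalan_two_mul_add_one_cast_of_charTwo {R : Type*} [CommSemiring R] [CharP R 2] (m : ℕ) :
    (catalan (2 * m + 1) : R) = (catalan m : R) ^ 2 := by
  rw [catalan_succ', Nat.cast_sum]
  simp only [Nat.cast_mul]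
  exact Finset.Nat.sum_antidiagonal_two_mul_mul_of_charTwo (fun i => (catalan i : R)) m

theorem odd_catalan_two_mul_add_one_iff (m : ℕ) : Odd (catalan (2 * m + 1)) ↔ Odd (catalan m) := by
  rw [← ZMod.natCast_eq_one_iff_odd, ← ZMod.natCast_eq_one_iff_odd,
    catalan_two_mul_add_one_cast_of_charTwo, ZMod.pow_card]

theorem stmt_7 : ∀ k : ℕ, Odd (catalan (2 ^ k - 1)) := by
  intro k
  induction k with
  | zero => simp
  | succ k ih =>
    have hpow : 2 ^ (k + 1) - 1 = 2 * (2 ^ k - 1) + 1 := by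
      have : 1 ≤ 2 ^ k := Nat.one_le_two_pow
      rw [pow_succ]
      omega
    rwa [hpow, odd_catalan_two_mul_add_one_iff]
end

section
/- A Catalan number Cat(n) is odd if and only if n = 2^k - 1 for some k ≥ 0. -/
open Finset

lemma catalan_succ_range (n : ℕ) :
    catalan (n + 1) = ∑ i ∈ range (n + 1), catalan i * catalan (n - i) := by
  rw [catalan_succ, ← Fin.sum_univ_eq_sum_range]

lemma key (n : ℕ) :
    (catalan (n + 1) : ZMod 2) = if Even n then (catalan (n / 2) : ZMod 2) else 0 := by
  have h := catalan_succ_range n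
  have : (catalan (n+1) : ZMod 2) = ∑ i ∈ range (n+1), (catalan i : ZMod 2) * (catalan (n - i)) := by
    rw [h]; push_cast; ring_nf
  rw [this]
  set f : ℕ → ZMod 2 := fun i => (catalan i : ZMod 2) * (catalan (n - i) : ZMod 2) with hf
  by_cases hn : Even n
  · obtain ⟨m, hm⟩ := hn
    have hmem : m ∈ range (n+1) := by simp [hm]
    rw [← Finset.add_sum_erase _ f hmem]
    have h0 : ∑ i ∈ (range (n+1)).erase m, f i = 0 := by
      apply Finset.sum_involution (fun a _ => n - a)
      · intro a ha
        have ha' : a ≤ n := by simp at ha; omega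
        simp only [hf, Nat.sub_sub_self ha']
        ring_nf
        rw [show (2:ZMod 2) = 0 by decide, mul_zero]
      · intro a ha _
        simp only [mem_erase, mem_range] at ha
        omega
      · intro a ha
        simp only [mem_erase, mem_range] at ha ⊢
        omega
      · intro a ha
        simp only [mem_erase, mem_range] at ha
        omega
    rw [h0, add_zero]
    have : n / 2 = m := by omega
    have hnm : n - m = m := by omega
    simp only [hf, hnm, this]
    split_ifs with h'
    · have hx : ∀ x : ZMod 2, x * x = x := by decide
      exact hx _
    · exact absurd ⟨m, hm⟩ h'
  · simp only [if_neg hn]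
    apply Finset.sum_involution (fun a _ => n - a)
    · intro a ha
      have ha' : a ≤ n := by simp at ha; omega
      simp only [hf, Nat.sub_sub_self ha']
      ring_nf
      rw [show (2:ZMod 2) = 0 by decide, mul_zero]
    · intro a ha _
      simp only [mem_range] at ha
      intro hc; exact hn ⟨a, by omega⟩
    · intro a ha
      simp only [mem_range] at ha ⊢; omega
    · intro a ha
      simp only [mem_range] at ha; omega

lemma odd_iff_cast (x : ℕ) : Odd x ↔ (x : ZMod 2) = 1 := by
  rw [Nat.odd_iff, ← ZMod.natCast_mod]
  rcases Nat.mod_two_eq_zero_or_one x with h | h <;> simp [h]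

theorem stmt_8 : ∀ n : ℕ, Odd (catalan n) ↔ ∃ k : ℕ, n = 2 ^ k - 1 := by
  intro n
  induction n using Nat.strong_induction_on with
  | _ n ih =>
    match n with
    | 0 =>
      simp only [catalan_zero]
      exact ⟨fun _ => ⟨0, rfl⟩, fun _ => odd_one⟩
    | m + 1 =>
      rw [odd_iff_cast, key m]
      by_cases hm : Even m
      · rw [if_pos hm, ← odd_iff_cast, ih (m / 2) (by omega)]
        constructor
        · rintro ⟨k, hk⟩
          refine ⟨k + 1, ?_⟩
          have h1 : 1 ≤ 2 ^ k := Nat.one_le_two_pow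
          have h2 : 2 ^ (k + 1) = 2 * 2 ^ k := by ring
          obtain ⟨j, hj⟩ := hm
          omega
        · rintro ⟨k, hk⟩
          match k with
          | 0 => omega
          | j + 1 =>
            refine ⟨j, ?_⟩
            have h1 : 1 ≤ 2 ^ j := Nat.one_le_two_pow
            have h2 : 2 ^ (j + 1) = 2 * 2 ^ j := by ring
            omega
      · rw [if_neg hm]
        constructor
        · intro h; exact absurd h (by decide)
        · rintro ⟨k, hk⟩
          exfalso
          match k with
          | 0 => omega
          | j + 1 =>
            have h1 : 1 ≤ 2 ^ j := Nat.one_le_two_pow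
            have h2 : 2 ^ (j + 1) = 2 * 2 ^ j := by ring
            exact hm ⟨2 ^ j - 1, by omega⟩
end
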